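/- arXiv:2201.02197 — 2 statements merged into one kernel-verified Lean document; each statement's English description precedes it below -/
import Mathlib

section
/- (4-Bubble Lemma.) Suppose a configuration of 4 regions on ℝ with density |x| is isoperimetric and each of its regions consists of a single interval. Then no interval contains 0 in its interior, exactly two of the four intervals are contained in (−∞,0], and exactly two are contained in [0,∞). -/
/-!
In the mass coordinate `u = x|x|/2` the density `|x| dx` becomes Lebesgue measure, and a
boundary point at mass coordinate `u` costs `√(2|u|)`, an even function that is strictly concave
on each half-line. Sort the four intervals. Laying the intervals end to end around `0` in another
order keeps all masses, so it bounds the perimeter from above; the mass to be crossed from `0` to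
each actual endpoint bounds it from below. Comparing the two rules out, in turn: the first
interval lying in `[0, ∞)`; the first interval straddling `0` (by strict concavity, sliding it
entirely to one side of `0` is strictly cheaper); the second interval lying in `[0, ∞)` while the
first lies in `(-∞, 0]`; and the second interval straddling `0`. Hence the second interval lies in
`(-∞, 0]`, and by reflection the third lies in `[0, ∞)`.
-/

open MeasureTheory Finset

/-- A configuration of `n` regions made of `k` nondegenerate closed intervals
with pairwise disjoint interiors, each interval labeled by one of the regions. -/
structure Config (n k : ℕ) where
  lo : Fin k → ℝ
  hi : Fin k → ℝ
  lab : Fin k → Fin n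
  nondeg : ∀ j, lo j < hi j
  disj : ∀ i j, i ≠ j → Set.Ioo (lo i) (hi i) ∩ Set.Ioo (lo j) (hi j) = ∅

namespace Config

variable {n k : ℕ}

/-- Weighted mass of region `i` with respect to the density `|x|`. -/
noncomputable def mass (C : Config n k) (i : Fin n) : ℝ :=
  ∑ j ∈ univ.filter (fun j => C.lab j = i), ∫ x in C.lo j..C.hi j, |x|

/-- The (finite) set of all endpoints of intervals of the configuration. -/
noncomputable def endpointSet (C : Config n k) : Finset ℝ :=
  image C.lo univ ∪ image C.hi univ

/-- Total weighted perimeter with respect to the density `|x|`. -/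
noncomputable def perim (C : Config n k) : ℝ :=
  ∑ x ∈ C.endpointSet, |x|

/-- A configuration is condensed if the union of its intervals is a closed interval
containing `0` and each region has at most one interval contained in `(-∞,0]`
and at most one interval contained in `[0,∞)`. -/
def Condensed (C : Config n k) : Prop :=
  (∃ a b : ℝ, a ≤ 0 ∧ 0 ≤ b ∧ (⋃ j, Set.Icc (C.lo j) (C.hi j)) = Set.Icc a b) ∧
  ∀ i : Fin n,
    (univ.filter (fun j => C.lab j = i ∧ C.hi j ≤ 0)).card ≤ 1 ∧
    (univ.filter (fun j => C.lab j = i ∧ 0 ≤ C.lo j)).card ≤ 1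

/-- A configuration is isoperimetric if its total weighted perimeter is least among all
configurations of `n` regions with the same list of weighted masses. -/
def Isoperimetric (C : Config n k) : Prop :=
  ∀ (k' : ℕ) (C' : Config n k'), (∀ i, C'.mass i = C.mass i) → C.perim ≤ C'.perim

end Config

open Function

noncomputable def massCoord (x : ℝ) : ℝ := x * |x| / 2

noncomputable def weight (y : ℝ) : ℝ := √(2 * |y|)

theorem massCoord_zero : massCoord 0 = 0 := by simp [massCoord]

theorem massCoord_strictMono : StrictMono massCoord := by
  intro x y hxy
  simp only [massCoord]
  rcases abs_cases x with ⟨hx, hx'⟩ | ⟨hx, hx'⟩ <;>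
    rcases abs_cases y with ⟨hy, hy'⟩ | ⟨hy, hy'⟩ <;> rw [hx, hy] <;> nlinarith

theorem massCoord_nonneg_iff {x : ℝ} : 0 ≤ massCoord x ↔ 0 ≤ x := by
  simpa [massCoord_zero] using massCoord_strictMono.le_iff_le (a := 0) (b := x)

theorem massCoord_nonpos_iff {x : ℝ} : massCoord x ≤ 0 ↔ x ≤ 0 := by
  simpa [massCoord_zero] using massCoord_strictMono.le_iff_le (a := x) (b := 0)

theorem massCoord_pos_iff {x : ℝ} : 0 < massCoord x ↔ 0 < x :=
  lt_iff_lt_of_le_iff_le massCoord_nonpos_iff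

theorem massCoord_neg_iff {x : ℝ} : massCoord x < 0 ↔ x < 0 :=
  lt_iff_lt_of_le_iff_le massCoord_nonneg_iff

theorem integral_abs_zero_left (u : ℝ) : ∫ t in (0 : ℝ)..u, |t| = massCoord u := by
  rcases le_total 0 u with hu | hu
  · rw [intervalIntegral.integral_congr (g := fun t => t) fun t ht => abs_of_nonneg ?_,
      integral_id, massCoord, abs_of_nonneg hu]
    · ring
    · exact (Set.uIcc_of_le hu ▸ ht).1
  · rw [intervalIntegral.integral_congr (g := fun t => -t) fun t ht => abs_of_nonpos ?_,
      intervalIntegral.integral_neg, integral_id, massCoord, abs_of_nonpos hu]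
    · ring
    · exact (Set.uIcc_of_ge hu ▸ ht).2

theorem integral_abs_eq_sub (a b : ℝ) : ∫ t in a..b, |t| = massCoord b - massCoord a := by
  rw [← integral_abs_zero_left, ← integral_abs_zero_left,
    intervalIntegral.integral_interval_sub_left] <;>
    exact continuous_abs.intervalIntegrable _ _

theorem weight_massCoord (x : ℝ) : weight (massCoord x) = |x| := by
  rw [weight, massCoord, abs_div, abs_mul, abs_abs, abs_two,
    show 2 * (|x| * |x| / 2) = |x| * |x| by ring, Real.sqrt_mul_self (abs_nonneg x)]

theorem massCoord_surjective : Surjective massCoord := by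
  intro y
  rcases le_total 0 y with hy | hy
  · refine ⟨√(2 * y), ?_⟩
    rw [massCoord, abs_of_nonneg (Real.sqrt_nonneg _), Real.mul_self_sqrt (by linarith)]
    ring
  · refine ⟨-√(-2 * y), ?_⟩
    rw [massCoord, abs_neg, abs_of_nonneg (Real.sqrt_nonneg _), neg_mul,
      Real.mul_self_sqrt (by linarith)]
    ring

noncomputable def massCoordIso : ℝ ≃o ℝ :=
  StrictMono.orderIsoOfSurjective massCoord massCoord_strictMono massCoord_surjective

theorem massCoord_massCoordIso_symm (y : ℝ) : massCoord (massCoordIso.symm y) = y :=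
  StrictMono.orderIsoOfSurjective_self_symm_apply _ _ _ y

theorem abs_massCoordIso_symm (y : ℝ) : |massCoordIso.symm y| = weight y := by
  rw [← weight_massCoord, massCoord_massCoordIso_symm]

theorem weight_zero : weight 0 = 0 := by simp [weight]

theorem weight_neg (y : ℝ) : weight (-y) = weight y := by simp [weight]

theorem weight_nonneg (y : ℝ) : 0 ≤ weight y := Real.sqrt_nonneg _

theorem weight_of_nonneg {y : ℝ} (hy : 0 ≤ y) : weight y = √(2 * y) := by
  rw [weight, abs_of_nonneg hy]

theorem weight_le_weight {a b : ℝ} (ha : 0 ≤ a) (h : a ≤ b) : weight a ≤ weight b := by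
  rw [weight_of_nonneg ha, weight_of_nonneg (ha.trans h)]
  gcongr

theorem weight_le_weight_of_le_neg {a b : ℝ} (ha : 0 ≤ a) (h : a ≤ -b) :
    weight a ≤ weight b :=
  weight_neg b ▸ weight_le_weight ha h

theorem weight_lt_weight {a b : ℝ} (ha : 0 ≤ a) (h : a < b) : weight a < weight b := by
  rw [weight_of_nonneg ha, weight_of_nonneg (by linarith)]
  gcongr

theorem weight_add_add_le {a b d : ℝ} (hb : 0 ≤ b) (hba : b ≤ a) (hd : 0 ≤ d) :
    weight (d + a) + weight b ≤ weight (d + b) + weight a := by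
  rw [weight_of_nonneg (by linarith), weight_of_nonneg hb, weight_of_nonneg (by linarith),
    weight_of_nonneg (by linarith)]
  have hp := Real.sq_sqrt (by linarith : 0 ≤ 2 * a)
  have hq := Real.sq_sqrt (by linarith : 0 ≤ 2 * b)
  have hu := Real.sq_sqrt (by linarith : 0 ≤ 2 * (d + a))
  have hv := Real.sq_sqrt (by linarith : 0 ≤ 2 * (d + b))
  have hqp : √(2 * b) ≤ √(2 * a) := Real.sqrt_le_sqrt (by linarith)
  have hvu : √(2 * (d + b)) ≤ √(2 * (d + a)) := Real.sqrt_le_sqrt (by linarith)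
  have hpu : √(2 * a) ≤ √(2 * (d + a)) := Real.sqrt_le_sqrt (by linarith)
  have hqv : √(2 * b) ≤ √(2 * (d + b)) := Real.sqrt_le_sqrt (by linarith)
  nlinarith [mul_nonneg (sub_nonneg.2 hqp) (sub_nonneg.2 hvu), Real.sqrt_nonneg (2 * b)]

theorem mul_weight_add_mul_weight_lt {l r a b c : ℝ} (hl : 0 < l) (hr : 0 < r) (ha : 0 ≤ a)
    (hb : b = a + r) (hc : c = a + l + r) :
    l * weight a + r * weight c < (l + r) * weight b := by
  subst hb hc
  rw [weight_of_nonneg ha, weight_of_nonneg (by linarith), weight_of_nonneg (by linarith)]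
  set x := √(2 * a)
  set y := √(2 * (a + l + r))
  set z := √(2 * (a + r))
  have hx := Real.sq_sqrt (by linarith : 0 ≤ 2 * a)
  have hy := Real.sq_sqrt (by linarith : 0 ≤ 2 * (a + l + r))
  have hz := Real.sq_sqrt (by linarith : 0 ≤ 2 * (a + r))
  have hxy : x < y := Real.sqrt_lt_sqrt (by linarith) (by linarith)
  -- `(l + r) z² = l x² + r y²`
  have key : (l * x + r * y) ^ 2 + l * r * (y - x) ^ 2 = ((l + r) * z) ^ 2 := by
    linear_combination (l + r) * l * hx + (l + r) * r * hy - (l + r) ^ 2 * hz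
  refine lt_of_pow_lt_pow_left₀ 2 (by positivity) ?_
  nlinarith [mul_pos (mul_pos hl hr) (pow_pos (sub_pos.2 hxy) 2)]

namespace Config

variable {n k : ℕ}

noncomputable def intervalMass (C : Config n k) (j : Fin k) : ℝ := ∫ x in C.lo j..C.hi j, |x|

theorem massCoord_hi (C : Config n k) (j : Fin k) :
    massCoord (C.hi j) = massCoord (C.lo j) + C.intervalMass j := by
  rw [intervalMass, integral_abs_eq_sub]
  ring

theorem intervalMass_pos (C : Config n k) (j : Fin k) : 0 < C.intervalMass j := by
  rw [intervalMass, integral_abs_eq_sub, sub_pos]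
  exact massCoord_strictMono (C.nondeg j)

theorem mass_lab (C : Config n k) (hlab : Injective C.lab) (j : Fin k) :
    C.mass (C.lab j) = C.intervalMass j := by
  have : univ.filter (fun j' => C.lab j' = C.lab j) = {j} := by
    ext
    simp [hlab.eq_iff]
  rw [mass, this, sum_singleton, intervalMass]

theorem lo_mem_endpointSet (C : Config n k) (j : Fin k) : C.lo j ∈ C.endpointSet :=
  mem_union_left _ (mem_image_of_mem _ (mem_univ j))

theorem hi_mem_endpointSet (C : Config n k) (j : Fin k) : C.hi j ∈ C.endpointSet :=
  mem_union_right _ (mem_image_of_mem _ (mem_univ j))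

theorem sum_abs_le_perim (C : Config n k) {p : ℕ} {z : Fin p → ℝ} (hz : Injective z)
    (hmem : ∀ i, z i ∈ C.endpointSet) : ∑ i, |z i| ≤ C.perim := by
  rw [perim, ← sum_image (f := abs) hz.injOn]
  refine sum_le_sum_of_subset_of_nonneg ?_ fun _ _ _ => abs_nonneg _
  simpa [image_subset_iff] using hmem

theorem hi_le_lo_of_lo_le (C : Config n k) {i j : Fin k} (hij : i ≠ j) (h : C.lo i ≤ C.lo j) :
    C.hi i ≤ C.lo j := by
  have := Set.Ioo_disjoint_Ioo.1 (Set.disjoint_iff_inter_eq_empty.2 (C.disj i j hij))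
  rw [max_eq_right h] at this
  exact (min_le_iff.1 this).resolve_right (not_le.2 (C.nondeg j))

theorem Isoperimetric.of_mass_perim {C D : Config n k} (hC : C.Isoperimetric)
    (hm : ∀ i, D.mass i = C.mass i) (hp : D.perim = C.perim) : D.Isoperimetric :=
  fun k' C' h => hp ▸ hC k' C' fun i => (h i).trans (hm i)

def reindex (C : Config n k) (σ : Equiv.Perm (Fin k)) : Config n k where
  lo := C.lo ∘ σ
  hi := C.hi ∘ σ
  lab := C.lab ∘ σ
  nondeg j := C.nondeg (σ j)
  disj i j hij := C.disj (σ i) (σ j) (σ.injective.ne hij)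

theorem mass_reindex (C : Config n k) (σ : Equiv.Perm (Fin k)) (i : Fin n) :
    (C.reindex σ).mass i = C.mass i := by
  rw [mass, mass, sum_filter, sum_filter]
  exact Equiv.sum_comp σ fun j => if C.lab j = i then ∫ x in C.lo j..C.hi j, |x| else 0

theorem perim_reindex (C : Config n k) (σ : Equiv.Perm (Fin k)) :
    (C.reindex σ).perim = C.perim := by
  simp only [perim, endpointSet, reindex, ← image_image, image_univ_equiv]

def reflect (C : Config n k) : Config n k where
  lo j := -C.hi j
  hi j := -C.lo j
  lab := C.lab
  nondeg j := neg_lt_neg (C.nondeg j)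
  disj i j hij := by
    rw [← Set.neg_Ioo, ← Set.neg_Ioo, ← Set.inter_neg, C.disj i j hij, Set.neg_empty]

theorem mass_reflect (C : Config n k) (i : Fin n) : C.reflect.mass i = C.mass i := by
  refine sum_congr rfl fun j _ => ?_
  simp only [reflect]
  rw [← intervalIntegral.integral_comp_neg (fun x => |x|)]
  simp only [abs_neg]

theorem perim_reflect (C : Config n k) : C.reflect.perim = C.perim := by
  have : C.reflect.endpointSet = C.endpointSet.image Neg.neg := by
    simp only [endpointSet, reflect, image_union, image_image, union_comm]
    rfl
  rw [perim, this, sum_image neg_injective.injOn]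
  simp only [abs_neg, perim]

def Sorted (C : Config n k) : Prop := ∀ ⦃i j⦄, i < j → C.hi i ≤ C.lo j

theorem exists_sorted_reindex (C : Config n k) : ∃ σ, (C.reindex σ).Sorted :=
  ⟨Tuple.sort C.lo, fun _ _ hij => C.hi_le_lo_of_lo_le ((Tuple.sort C.lo).injective.ne hij.ne)
    (Tuple.monotone_sort C.lo hij.le)⟩

theorem Sorted.massCoord_lo_add_le {C : Config n k} (hsort : C.Sorted) {i j : Fin k}
    (hij : i < j) : massCoord (C.lo i) + C.intervalMass i ≤ massCoord (C.lo j) :=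
  C.massCoord_hi i ▸ massCoord_strictMono.monotone (hsort hij)

def mirror (C : Config n k) : Config n k := C.reflect.reindex Fin.revPerm

theorem Sorted.mirror {C : Config n k} (h : C.Sorted) : C.mirror.Sorted :=
  fun _ _ hij => neg_le_neg (h (Fin.rev_lt_rev.2 hij))

theorem Isoperimetric.mirror {C : Config n k} (hC : C.Isoperimetric) : C.mirror.Isoperimetric :=
  hC.of_mass_perim (fun i => by rw [Config.mirror, mass_reindex, mass_reflect])
    (by rw [Config.mirror, perim_reindex, perim_reflect])

def chain (x : Fin (k + 1) → ℝ) (hx : StrictMono x) (lab : Fin k → Fin n) : Config n k where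
  lo t := x t.castSucc
  hi t := x t.succ
  lab := lab
  nondeg t := hx t.castSucc_lt_succ
  disj i j hij := by
    wlog h : i < j generalizing i j
    · rw [Set.inter_comm]
      exact this j i hij.symm (lt_of_le_of_ne (not_lt.1 h) hij.symm)
    rw [← Set.disjoint_iff_inter_eq_empty, Set.Ioo_disjoint_Ioo]
    exact (min_le_left _ _).trans
      ((hx.monotone (Fin.succ_le_castSucc_iff.2 h)).trans (le_max_right _ _))

theorem perim_chain_le (x : Fin (k + 1) → ℝ) (hx : StrictMono x) (lab : Fin k → Fin n) :
    (chain x hx lab).perim ≤ ∑ i, |x i| := by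
  rw [perim, ← sum_image (f := abs) hx.injective.injOn]
  refine sum_le_sum_of_subset_of_nonneg ?_ fun _ _ _ => abs_nonneg _
  simp [endpointSet, chain, union_subset_iff, image_subset_iff]

/-- `s` lists the mass coordinates of the endpoints of a rearrangement of the intervals of `C`,
laid end to end. -/
theorem Isoperimetric.perim_le_sum_weight {C : Config n k} (hC : C.Isoperimetric)
    (hlab : Bijective C.lab) {ρ : Fin k → Fin k} (hρ : Injective ρ) (s : Fin (k + 1) → ℝ)
    (hs : ∀ t, s t.succ - s t.castSucc = C.intervalMass (ρ t)) :
    C.perim ≤ ∑ i, weight (s i) := by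
  have hmono : StrictMono s :=
    Fin.strictMono_iff_lt_succ.2 fun t => by linarith [hs t, C.intervalMass_pos (ρ t)]
  have hlabρ : Bijective (C.lab ∘ ρ) := hlab.comp (Finite.injective_iff_bijective.1 hρ)
  set D := chain (massCoordIso.symm ∘ s) (massCoordIso.symm.strictMono.comp hmono) (C.lab ∘ ρ)
  have hmass : ∀ i, D.mass i = C.mass i := by
    intro i
    obtain ⟨t, rfl⟩ := hlabρ.2 i
    calc D.mass (C.lab (ρ t)) = D.intervalMass t := D.mass_lab hlabρ.1 t
      _ = C.intervalMass (ρ t) := by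
        simp only [D, chain, intervalMass, integral_abs_eq_sub, comp_apply,
          massCoord_massCoordIso_symm, hs]
      _ = C.mass (C.lab (ρ t)) := (C.mass_lab hlab.1 _).symm
  calc C.perim ≤ D.perim := hC _ D hmass
    _ ≤ ∑ i, |massCoordIso.symm (s i)| := perim_chain_le _ _ _
    _ = ∑ i, weight (s i) := by simp only [abs_massCoordIso_symm]

section FourIntervals

variable {C : Config n 4}

theorem Sorted.sum_weight_le_perim (hsort : C.Sorted) :
    weight (massCoord (C.lo 0)) + weight (massCoord (C.hi 0)) + weight (massCoord (C.hi 1)) +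
      weight (massCoord (C.hi 2)) + weight (massCoord (C.hi 3)) ≤ C.perim := by
  have h₁ := hsort (show (0 : Fin 4) < 1 by decide)
  have h₂ := hsort (show (1 : Fin 4) < 2 by decide)
  have h₃ := hsort (show (2 : Fin 4) < 3 by decide)
  have hz : StrictMono ![C.lo 0, C.hi 0, C.hi 1, C.hi 2, C.hi 3] := by
    simpa [Fin.strictMono_iff_lt_succ, Fin.forall_fin_succ, C.nondeg] using
      ⟨h₁.trans_lt (C.nondeg 1), h₂.trans_lt (C.nondeg 2), h₃.trans_lt (C.nondeg 3)⟩
  have hmem : ∀ i, ![C.lo 0, C.hi 0, C.hi 1, C.hi 2, C.hi 3] i ∈ C.endpointSet := by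
    intro i
    fin_cases i <;> simp [lo_mem_endpointSet, hi_mem_endpointSet]
  simpa [Fin.sum_univ_five, weight_massCoord] using C.sum_abs_le_perim hz.injective hmem

theorem Sorted.lo_zero_neg (hsort : C.Sorted) (hC : C.Isoperimetric) (hlab : Bijective C.lab) :
    C.lo 0 < 0 := by
  by_contra! h
  have hlow := hsort.sum_weight_le_perim
  have h₁ := hsort.massCoord_lo_add_le (show (0 : Fin 4) < 1 by decide)
  have h₂ := hsort.massCoord_lo_add_le (show (1 : Fin 4) < 2 by decide)
  have h₃ := hsort.massCoord_lo_add_le (show (2 : Fin 4) < 3 by decide)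
  have h₀ : 0 ≤ massCoord (C.lo 0) := massCoord_nonneg_iff.2 h
  simp only [massCoord_hi] at hlow
  set m := C.intervalMass
  have hm : ∀ t, 0 < m t := C.intervalMass_pos
  -- move the rightmost interval to the far side of `0`
  have hup := hC.perim_le_sum_weight hlab (ρ := ![3, 0, 1, 2]) (by decide)
    ![-m 3, 0, m 0, m 0 + m 1, m 0 + m 1 + m 2] (by intro t; fin_cases t <;> simp [m])
  rw [Fin.sum_univ_five] at hup
  simp only [Matrix.cons_val, weight_neg, weight_zero, add_zero] at hup
  linarith [weight_nonneg (massCoord (C.lo 0)),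
    weight_le_weight (hm 0).le (show m 0 ≤ massCoord (C.lo 0) + m 0 by linarith),
    weight_le_weight (by linarith [hm 0, hm 1])
      (show m 0 + m 1 ≤ massCoord (C.lo 1) + m 1 by linarith),
    weight_le_weight (by linarith [hm 0, hm 1, hm 2])
      (show m 0 + m 1 + m 2 ≤ massCoord (C.lo 2) + m 2 by linarith),
    weight_lt_weight (hm 3).le
      (show m 3 < massCoord (C.lo 3) + m 3 by linarith [hm 0, hm 1, hm 2])]

theorem Sorted.lo_one_neg_of_hi_zero_nonpos (hsort : C.Sorted) (hC : C.Isoperimetric)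
    (hlab : Bijective C.lab) (h : C.hi 0 ≤ 0) : C.lo 1 < 0 := by
  by_contra! h'
  have hlow := hsort.sum_weight_le_perim
  have h₂ := hsort.massCoord_lo_add_le (show (1 : Fin 4) < 2 by decide)
  have h₃ := hsort.massCoord_lo_add_le (show (2 : Fin 4) < 3 by decide)
  have h₀ := massCoord_nonpos_iff.2 h
  have h₁ : 0 ≤ massCoord (C.lo 1) := massCoord_nonneg_iff.2 h'
  simp only [massCoord_hi] at hlow h₀
  set m := C.intervalMass
  have hm : ∀ t, 0 < m t := C.intervalMass_pos
  have hlow' : weight (m 0) + weight (m 1) + weight (m 1 + m 2) + weight (m 1 + m 2 + m 3) ≤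
      C.perim := by
    linarith [weight_nonneg (massCoord (C.lo 0) + m 0),
      weight_le_weight_of_le_neg (hm 0).le (show m 0 ≤ -massCoord (C.lo 0) by linarith),
      weight_le_weight (hm 1).le (show m 1 ≤ massCoord (C.lo 1) + m 1 by linarith),
      weight_le_weight (by linarith [hm 1, hm 2])
        (show m 1 + m 2 ≤ massCoord (C.lo 2) + m 2 by linarith),
      weight_le_weight (by linarith [hm 1, hm 2, hm 3])
        (show m 1 + m 2 + m 3 ≤ massCoord (C.lo 3) + m 3 by linarith)]
  rcases le_or_gt (m 2) (m 0) with h₂₀ | h₀₂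
  · -- nest the second interval inside the first one, to the left of `0`
    have hup := hC.perim_le_sum_weight hlab (ρ := id) injective_id
      ![-(m 1 + m 0), -m 1, 0, m 2, m 2 + m 3] (by intro t; fin_cases t <;> simp [m])
    rw [Fin.sum_univ_five] at hup
    simp only [Matrix.cons_val, weight_neg, weight_zero, add_zero] at hup
    linarith [weight_add_add_le (hm 2).le h₂₀ (hm 1).le,
      weight_lt_weight (by linarith [hm 2, hm 3])
        (show m 2 + m 3 < m 1 + m 2 + m 3 by linarith [hm 1])]
  · -- move the rightmost interval to the far left
    have hup := hC.perim_le_sum_weight hlab (ρ := ![3, 0, 1, 2]) (by decide)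
      ![-(m 0 + m 3), -m 0, 0, m 1, m 1 + m 2] (by intro t; fin_cases t <;> simp [m])
    rw [Fin.sum_univ_five] at hup
    simp only [Matrix.cons_val, weight_neg, weight_zero, add_zero] at hup
    linarith [weight_lt_weight (by linarith [hm 0, hm 3])
      (show m 0 + m 3 < m 1 + m 2 + m 3 by linarith [hm 1])]

theorem Sorted.hi_zero_nonpos_of_lo_zero_neg (hsort : C.Sorted) (hC : C.Isoperimetric)
    (hlab : Bijective C.lab) (h : C.lo 0 < 0) : C.hi 0 ≤ 0 := by
  by_contra! h'
  have hlow := hsort.sum_weight_le_perim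
  have h₁ := hsort.massCoord_lo_add_le (show (0 : Fin 4) < 1 by decide)
  have h₂ := hsort.massCoord_lo_add_le (show (1 : Fin 4) < 2 by decide)
  have h₃ := hsort.massCoord_lo_add_le (show (2 : Fin 4) < 3 by decide)
  have hl : 0 < -massCoord (C.lo 0) := neg_pos.2 (massCoord_neg_iff.2 h)
  have hr := massCoord_pos_iff.2 h'
  simp only [massCoord_hi] at hlow hr
  set m := C.intervalMass
  have hm : ∀ t, 0 < m t := C.intervalMass_pos
  set l := -massCoord (C.lo 0)
  set r := massCoord (C.lo 0) + m 0
  have hlow' : weight l + weight r + weight (r + m 1) + weight (r + m 1 + m 2) +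
      weight (r + m 1 + m 2 + m 3) ≤ C.perim := by
    linarith [weight_le_weight_of_le_neg hl.le (le_refl l),
      weight_le_weight (by linarith [hm 1]) (show r + m 1 ≤ massCoord (C.lo 1) + m 1 by linarith),
      weight_le_weight (by linarith [hm 1, hm 2])
        (show r + m 1 + m 2 ≤ massCoord (C.lo 2) + m 2 by linarith),
      weight_le_weight (by linarith [hm 1, hm 2, hm 3])
        (show r + m 1 + m 2 + m 3 ≤ massCoord (C.lo 3) + m 3 by linarith)]
  -- the straddling interval moved entirely to the left, resp. right, of `0`
  have hL := hC.perim_le_sum_weight hlab (ρ := id) injective_id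
    ![-m 0, 0, m 1, m 1 + m 2, m 1 + m 2 + m 3] (by intro t; fin_cases t <;> simp [m])
  have hR := hC.perim_le_sum_weight hlab (ρ := id) injective_id
    ![0, m 0, m 0 + m 1, m 0 + m 1 + m 2, m 0 + m 1 + m 2 + m 3]
    (by intro t; fin_cases t <;> simp [m])
  rw [Fin.sum_univ_five] at hL hR
  simp only [Matrix.cons_val, weight_neg, weight_zero, add_zero] at hL hR
  -- the perimeter is strictly concave in the position of the straddling interval
  have c₀ := mul_weight_add_mul_weight_lt (a := 0) (b := l) (c := m 0) hr hl le_rfl (by ring)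
    (by ring)
  have c₁ := mul_weight_add_mul_weight_lt (a := 0) (b := r) (c := m 0) hl hr le_rfl (by ring)
    (by ring)
  have c₂ := mul_weight_add_mul_weight_lt (a := m 1) (b := r + m 1) (c := m 0 + m 1) hl hr
    (hm 1).le (by ring) (by ring)
  have c₃ := mul_weight_add_mul_weight_lt (a := m 1 + m 2) (b := r + m 1 + m 2)
    (c := m 0 + m 1 + m 2) hl hr (by linarith [hm 1, hm 2]) (by ring) (by ring)
  have c₄ := mul_weight_add_mul_weight_lt (a := m 1 + m 2 + m 3) (b := r + m 1 + m 2 + m 3)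
    (c := m 0 + m 1 + m 2 + m 3) hl hr (by linarith [hm 1, hm 2, hm 3]) (by ring) (by ring)
  rw [weight_zero] at c₀ c₁
  linarith [mul_le_mul_of_nonneg_left hlow' (by linarith : 0 ≤ l + r),
    mul_le_mul_of_nonneg_left hL hl.le, mul_le_mul_of_nonneg_left hR hr.le]

theorem Sorted.hi_one_nonpos_of_lo_one_neg (hsort : C.Sorted) (hC : C.Isoperimetric)
    (hlab : Bijective C.lab) (h : C.lo 1 < 0) : C.hi 1 ≤ 0 := by
  by_contra! h'
  have hlow := hsort.sum_weight_le_perim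
  have h₁ := hsort.massCoord_lo_add_le (show (0 : Fin 4) < 1 by decide)
  have h₂ := hsort.massCoord_lo_add_le (show (1 : Fin 4) < 2 by decide)
  have h₃ := hsort.massCoord_lo_add_le (show (2 : Fin 4) < 3 by decide)
  have hl : 0 < -massCoord (C.lo 1) := neg_pos.2 (massCoord_neg_iff.2 h)
  have hr := massCoord_pos_iff.2 h'
  simp only [massCoord_hi] at hlow hr
  set m := C.intervalMass
  have hm : ∀ t, 0 < m t := C.intervalMass_pos
  set l := -massCoord (C.lo 1)
  set r := massCoord (C.lo 1) + m 1
  have hlow' : weight (l + m 0) + weight l + weight r + weight (r + m 2) +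
      weight (r + m 2 + m 3) ≤ C.perim := by
    linarith [weight_le_weight_of_le_neg (by linarith [hm 0])
        (show l + m 0 ≤ -massCoord (C.lo 0) by linarith),
      weight_le_weight_of_le_neg hl.le (show l ≤ -(massCoord (C.lo 0) + m 0) by linarith),
      weight_le_weight (by linarith [hm 2]) (show r + m 2 ≤ massCoord (C.lo 2) + m 2 by linarith),
      weight_le_weight (by linarith [hm 2, hm 3])
        (show r + m 2 + m 3 ≤ massCoord (C.lo 3) + m 3 by linarith)]
  -- the straddling interval moved entirely to the left, resp. right, of `0`
  have hL := hC.perim_le_sum_weight hlab (ρ := id) injective_id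
    ![-(m 1 + m 0), -m 1, 0, m 2, m 2 + m 3] (by intro t; fin_cases t <;> simp [m])
  have hR := hC.perim_le_sum_weight hlab (ρ := id) injective_id
    ![-m 0, 0, m 1, m 1 + m 2, m 1 + m 2 + m 3] (by intro t; fin_cases t <;> simp [m])
  rw [Fin.sum_univ_five] at hL hR
  simp only [Matrix.cons_val, weight_neg, weight_zero, add_zero] at hL hR
  -- the perimeter is strictly concave in the position of the straddling interval
  have c₀ := mul_weight_add_mul_weight_lt (a := m 0) (b := l + m 0) (c := m 1 + m 0) hr hl
    (hm 0).le (by ring) (by ring)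
  have c₁ := mul_weight_add_mul_weight_lt (a := 0) (b := l) (c := m 1) hr hl le_rfl (by ring)
    (by ring)
  have c₂ := mul_weight_add_mul_weight_lt (a := 0) (b := r) (c := m 1) hl hr le_rfl (by ring)
    (by ring)
  have c₃ := mul_weight_add_mul_weight_lt (a := m 2) (b := r + m 2) (c := m 1 + m 2) hl hr
    (hm 2).le (by ring) (by ring)
  have c₄ := mul_weight_add_mul_weight_lt (a := m 2 + m 3) (b := r + m 2 + m 3)
    (c := m 1 + m 2 + m 3) hl hr (by linarith [hm 2, hm 3]) (by ring) (by ring)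
  rw [weight_zero] at c₁ c₂
  linarith [mul_le_mul_of_nonneg_left hlow' (by linarith : 0 ≤ l + r),
    mul_le_mul_of_nonneg_left hL hl.le, mul_le_mul_of_nonneg_left hR hr.le]

theorem Sorted.hi_one_nonpos (hsort : C.Sorted) (hC : C.Isoperimetric) (hlab : Bijective C.lab) :
    C.hi 1 ≤ 0 :=
  hsort.hi_one_nonpos_of_lo_one_neg hC hlab <| hsort.lo_one_neg_of_hi_zero_nonpos hC hlab <|
    hsort.hi_zero_nonpos_of_lo_zero_neg hC hlab <| hsort.lo_zero_neg hC hlab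

theorem Sorted.lo_two_nonneg (hsort : C.Sorted) (hC : C.Isoperimetric) (hlab : Bijective C.lab) :
    0 ≤ C.lo 2 :=
  neg_nonpos.1 <| hsort.mirror.hi_one_nonpos hC.mirror (hlab.comp Fin.revPerm.bijective)

theorem Sorted.two_left_two_right (hsort : C.Sorted) (h₁ : C.hi 1 ≤ 0) (h₂ : 0 ≤ C.lo 2) :
    (∀ j, ¬ (C.lo j < 0 ∧ 0 < C.hi j)) ∧
    (univ.filter (fun j : Fin 4 => C.hi j ≤ 0)).card = 2 ∧
    (univ.filter (fun j : Fin 4 => 0 ≤ C.lo j)).card = 2 := by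
  have h₀₁ := hsort (show (0 : Fin 4) < 1 by decide)
  have h₂₃ := hsort (show (2 : Fin 4) < 3 by decide)
  have h := C.nondeg
  refine ⟨fun j => ?_, card_eq_two.2 ⟨0, 1, by decide, ?_⟩,
    card_eq_two.2 ⟨2, 3, by decide, ?_⟩⟩
  · fin_cases j <;> simp <;> intro <;> linarith [h 0, h 1, h 2, h 3]
  all_goals ext j; fin_cases j <;> simp <;> linarith [h 0, h 1, h 2, h 3]

end FourIntervals

end Config

/-- 4-Bubble Lemma: if a configuration of `4` regions on `ℝ` with density `|x|` is
isoperimetric and each of its regions consists of a single interval, then no interval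
contains `0` in its interior, exactly two of the four intervals are contained in
`(-∞,0]`, and exactly two are contained in `[0,∞)`. -/
theorem four_bubble_lemma (k : ℕ) (C : Config 4 k) (hiso : C.Isoperimetric)
    (hsingle : ∀ i : Fin 4, (univ.filter (fun j => C.lab j = i)).card = 1) :
    (∀ j, ¬ (C.lo j < 0 ∧ 0 < C.hi j)) ∧
    (univ.filter (fun j : Fin k => C.hi j ≤ 0)).card = 2 ∧
    (univ.filter (fun j : Fin k => 0 ≤ C.lo j)).card = 2 := by
  have hlab : Bijective C.lab := (bijective_iff_existsUnique _).2 fun i =>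
    (Fintype.existsUnique_iff_card_one _).2 (hsingle i)
  obtain rfl : k = 4 := by simpa using Fintype.card_of_bijective hlab
  obtain ⟨σ, hσ⟩ := C.exists_sorted_reindex
  have hisoσ := hiso.of_mass_perim (C.mass_reindex σ) (C.perim_reindex σ)
  have hlabσ : Bijective (C.reindex σ).lab := hlab.comp σ.bijective
  obtain ⟨hstraddle, hleft, hright⟩ :=
    hσ.two_left_two_right (hσ.hi_one_nonpos hisoσ hlabσ) (hσ.lo_two_nonneg hisoσ hlabσ)
  refine ⟨fun j => by simpa [Config.reindex] using hstraddle (σ.symm j), ?_, ?_⟩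
  · rw [← hleft]
    exact (card_equiv σ fun j => by simp only [mem_filter, mem_univ, true_and]; rfl).symm
  · rw [← hright]
    exact (card_equiv σ fun j => by simp only [mem_filter, mem_univ, true_and]; rfl).symm
end

section
/- (Alternating 6-interval framework.) Let 0 < M₁ ≤ M₂ ≤ M₃ ≤ M₄ ≤ M₅ ≤ M₆ be real numbers. For every enumeration (u, v, w, x, y, z) of the multiset {M₁, …, M₆} (i.e. obtained from a permutation of the indices), one has √(2u) + √(2(u+v)) + √(2(u+v+w)) + √(2x) + √(2(x+y)) + √(2(x+y+z)) ≥ √(2M₂) + √(2(M₂+M₄)) + √(2(M₂+M₄+M₆)) + √(2M₁) + √(2(M₁+M₃)) + √(2(M₁+M₃+M₅)). (The left side is the total weighted perimeter of a configuration with three adjacent intervals of masses u (inner), v, w (outer) stacked from 0 on one side of the origin and three adjacent intervals of masses x (inner), y, z (outer) stacked from 0 on the other side, with density |x|.) -/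
/-! Auxiliary lemmas -/

lemma emb_le_aux {k n : ℕ} (e : Fin k ↪o Fin n) (i : Fin k) : (i : ℕ) ≤ (e i : ℕ) := by
  induction' hi : (i : ℕ) with m IH generalizing i
  · exact Nat.zero_le _
  · have hm : m < k := by omega
    have h1 := IH ⟨m, hm⟩ rfl
    have hlt : e ⟨m, hm⟩ < e i := e.strictMono (by simp [Fin.lt_def]; omega)
    rw [Fin.lt_def] at hlt
    omega

lemma sum_mono_lower (f : Fin 6 → ℝ) (hf : Monotone f) {k : ℕ} (hk : k ≤ 6)
    (S : Finset (Fin 6)) (hS : S.card = k) :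
    ∑ i : Fin k, f (Fin.castLE hk i) ≤ ∑ i ∈ S, f i := by
  have himg : Finset.image (S.orderEmbOfFin hS) Finset.univ = S := by
    ext j
    simp only [Finset.mem_image, Finset.mem_univ, true_and]
    constructor
    · rintro ⟨i, rfl⟩; exact S.orderEmbOfFin_mem hS i
    · intro hj
      have : j ∈ Set.range (S.orderEmbOfFin hS) := by
        rw [Finset.range_orderEmbOfFin]; exact hj
      obtain ⟨i, hi⟩ := this; exact ⟨i, hi⟩
  rw [← himg, Finset.sum_image (fun a _ b _ h => (S.orderEmbOfFin hS).injective h)]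
  apply Finset.sum_le_sum
  intro i _
  apply hf
  rw [Fin.le_def]
  exact emb_le_aux _ i

lemma L2aux (f : Fin 6 → ℝ) (hf : Monotone f) {a b : Fin 6} (hab : a ≠ b) :
    f 0 + f 1 ≤ f a + f b := by
  have h := sum_mono_lower f hf (k := 2) (by norm_num) ({a,b} : Finset (Fin 6))
    (by rw [Finset.card_insert_of_notMem (by simp [hab]), Finset.card_singleton])
  rw [Fin.sum_univ_two, Finset.sum_insert (by simp [hab]), Finset.sum_singleton] at h
  have h' : f 0 + f 1 ≤ f a + f b := h
  exact h'

lemma L3aux (f : Fin 6 → ℝ) (hf : Monotone f) {a b c : Fin 6} (hab : a ≠ b) (hac : a ≠ c)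
    (hbc : b ≠ c) : f 0 + f 1 + f 2 ≤ f a + f b + f c := by
  have h := sum_mono_lower f hf (k := 3) (by norm_num) ({a,b,c} : Finset (Fin 6))
    (by rw [Finset.card_insert_of_notMem (by simp [hab, hac]),
        Finset.card_insert_of_notMem (by simp [hbc]), Finset.card_singleton])
  rw [Fin.sum_univ_three, Finset.sum_insert (by simp [hab, hac]),
    Finset.sum_insert (by simp [hbc]), Finset.sum_singleton] at h
  have h' : f 0 + f 1 + f 2 ≤ f a + (f b + f c) := h
  linarith

lemma L4aux (f : Fin 6 → ℝ) (hf : Monotone f) {a b c d : Fin 6} (hab : a ≠ b) (hac : a ≠ c)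
    (had : a ≠ d) (hbc : b ≠ c) (hbd : b ≠ d) (hcd : c ≠ d) :
    f 0 + f 1 + f 2 + f 3 ≤ f a + f b + f c + f d := by
  have h := sum_mono_lower f hf (k := 4) (by norm_num) ({a,b,c,d} : Finset (Fin 6))
    (by rw [Finset.card_insert_of_notMem (by simp [hab, hac, had]),
        Finset.card_insert_of_notMem (by simp [hbc, hbd]),
        Finset.card_insert_of_notMem (by simp [hcd]), Finset.card_singleton])
  rw [Fin.sum_univ_four, Finset.sum_insert (by simp [hab, hac, had]),
    Finset.sum_insert (by simp [hbc, hbd]), Finset.sum_insert (by simp [hcd]),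
    Finset.sum_singleton] at h
  have h' : f 0 + f 1 + f 2 + f 3 ≤ f a + (f b + (f c + f d)) := h
  linarith

lemma L5aux (f : Fin 6 → ℝ) (hf : Monotone f) {a b c d e : Fin 6} (hab : a ≠ b) (hac : a ≠ c)
    (had : a ≠ d) (hae : a ≠ e) (hbc : b ≠ c) (hbd : b ≠ d) (hbe : b ≠ e) (hcd : c ≠ d)
    (hce : c ≠ e) (hde : d ≠ e) :
    f 0 + f 1 + f 2 + f 3 + f 4 ≤ f a + f b + f c + f d + f e := by
  have h := sum_mono_lower f hf (k := 5) (by norm_num) ({a,b,c,d,e} : Finset (Fin 6))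
    (by rw [Finset.card_insert_of_notMem (by simp [hab, hac, had, hae]),
        Finset.card_insert_of_notMem (by simp [hbc, hbd, hbe]),
        Finset.card_insert_of_notMem (by simp [hcd, hce]),
        Finset.card_insert_of_notMem (by simp [hde]), Finset.card_singleton])
  rw [Fin.sum_univ_five, Finset.sum_insert (by simp [hab, hac, had, hae]),
    Finset.sum_insert (by simp [hbc, hbd, hbe]), Finset.sum_insert (by simp [hcd, hce]),
    Finset.sum_insert (by simp [hde]), Finset.sum_singleton] at h
  have h' : f 0 + f 1 + f 2 + f 3 + f 4 ≤ f a + (f b + (f c + (f d + f e))) := h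
  linarith

/-- Abel-summation comparison for six sorted terms. -/
lemma abel6 (g0 g1 g2 g3 g4 g5 t0 t1 t2 t3 t4 t5 : ℝ)
    (ht0 : 0 < t0) (ht01 : t0 ≤ t1) (ht12 : t1 ≤ t2) (ht23 : t2 ≤ t3) (ht34 : t3 ≤ t4)
    (ht45 : t4 ≤ t5)
    (hg01 : g0 ≤ g1) (hg12 : g1 ≤ g2) (hg23 : g2 ≤ g3) (hg34 : g3 ≤ g4) (hg45 : g4 ≤ g5)
    (hP0 : t0 ≤ g0) (hP1 : t0 + t1 ≤ g0 + g1) (hP2 : t0 + t1 + t2 ≤ g0 + g1 + g2)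
    (hP3 : t0 + t1 + t2 + t3 ≤ g0 + g1 + g2 + g3)
    (hP4 : t0 + t1 + t2 + t3 + t4 ≤ g0 + g1 + g2 + g3 + g4)
    (hP5 : t0 + t1 + t2 + t3 + t4 + t5 ≤ g0 + g1 + g2 + g3 + g4 + g5) :
    Real.sqrt (2*t0) + Real.sqrt (2*t1) + Real.sqrt (2*t2) + Real.sqrt (2*t3) +
      Real.sqrt (2*t4) + Real.sqrt (2*t5) ≤
    Real.sqrt (2*g0) + Real.sqrt (2*g1) + Real.sqrt (2*g2) + Real.sqrt (2*g3) +
      Real.sqrt (2*g4) + Real.sqrt (2*g5) := by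
  have ht1 : 0 < t1 := lt_of_lt_of_le ht0 ht01
  have ht2 : 0 < t2 := lt_of_lt_of_le ht1 ht12
  have ht3 : 0 < t3 := lt_of_lt_of_le ht2 ht23
  have ht4 : 0 < t4 := lt_of_lt_of_le ht3 ht34
  have ht5 : 0 < t5 := lt_of_lt_of_le ht4 ht45
  have hgg0 : 0 < g0 := lt_of_lt_of_le ht0 hP0
  have hgg1 : 0 < g1 := lt_of_lt_of_le hgg0 hg01
  have hgg2 : 0 < g2 := lt_of_lt_of_le hgg1 hg12
  have hgg3 : 0 < g3 := lt_of_lt_of_le hgg2 hg23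
  have hgg4 : 0 < g4 := lt_of_lt_of_le hgg3 hg34
  have hgg5 : 0 < g5 := lt_of_lt_of_le hgg4 hg45
  set a0 := Real.sqrt (2*g0); set a1 := Real.sqrt (2*g1); set a2 := Real.sqrt (2*g2)
  set a3 := Real.sqrt (2*g3); set a4 := Real.sqrt (2*g4); set a5 := Real.sqrt (2*g5)
  set b0 := Real.sqrt (2*t0); set b1 := Real.sqrt (2*t1); set b2 := Real.sqrt (2*t2)
  set b3 := Real.sqrt (2*t3); set b4 := Real.sqrt (2*t4); set b5 := Real.sqrt (2*t5)
  have ha0 : 0 < a0 := Real.sqrt_pos.2 (by linarith)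
  have ha1 : 0 < a1 := Real.sqrt_pos.2 (by linarith)
  have ha2 : 0 < a2 := Real.sqrt_pos.2 (by linarith)
  have ha3 : 0 < a3 := Real.sqrt_pos.2 (by linarith)
  have ha4 : 0 < a4 := Real.sqrt_pos.2 (by linarith)
  have ha5 : 0 < a5 := Real.sqrt_pos.2 (by linarith)
  have hb0 : 0 < b0 := Real.sqrt_pos.2 (by linarith)
  have hb1 : 0 < b1 := Real.sqrt_pos.2 (by linarith)
  have hb2 : 0 < b2 := Real.sqrt_pos.2 (by linarith)
  have hb3 : 0 < b3 := Real.sqrt_pos.2 (by linarith)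
  have hb4 : 0 < b4 := Real.sqrt_pos.2 (by linarith)
  have hb5 : 0 < b5 := Real.sqrt_pos.2 (by linarith)
  set μ0 := 2 / (a0 + b0) with hμ0def
  set μ1 := 2 / (a1 + b1) with hμ1def
  set μ2 := 2 / (a2 + b2) with hμ2def
  set μ3 := 2 / (a3 + b3) with hμ3def
  set μ4 := 2 / (a4 + b4) with hμ4def
  set μ5 := 2 / (a5 + b5) with hμ5def
  have hsq : ∀ c : ℝ, 0 ≤ c → Real.sqrt (2*c) ^ 2 = 2*c := fun c hc =>
    Real.sq_sqrt (by linarith)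
  have key : ∀ (a b g t : ℝ), 0 < a → 0 < b → a^2 = 2*g → b^2 = 2*t →
      a - b = (g - t) * (2 / (a + b)) := by
    intro a b g t hha hhb hag hbt
    have hne : a + b ≠ 0 := by positivity
    rw [← mul_div_assoc, eq_div_iff hne]
    linear_combination hag - hbt
  have hd0 : a0 - b0 = (g0 - t0) * μ0 := key _ _ _ _ ha0 hb0 (hsq _ hgg0.le) (hsq _ ht0.le)
  have hd1 : a1 - b1 = (g1 - t1) * μ1 := key _ _ _ _ ha1 hb1 (hsq _ hgg1.le) (hsq _ ht1.le)
  have hd2 : a2 - b2 = (g2 - t2) * μ2 := key _ _ _ _ ha2 hb2 (hsq _ hgg2.le) (hsq _ ht2.le)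
  have hd3 : a3 - b3 = (g3 - t3) * μ3 := key _ _ _ _ ha3 hb3 (hsq _ hgg3.le) (hsq _ ht3.le)
  have hd4 : a4 - b4 = (g4 - t4) * μ4 := key _ _ _ _ ha4 hb4 (hsq _ hgg4.le) (hsq _ ht4.le)
  have hd5 : a5 - b5 = (g5 - t5) * μ5 := key _ _ _ _ ha5 hb5 (hsq _ hgg5.le) (hsq _ ht5.le)
  have hmon : ∀ (a b a' b' : ℝ), 0 < a → 0 < b → a ≤ a' → b ≤ b' →
      2 / (a' + b') ≤ 2 / (a + b) := by
    intro a b a' b' hha hhb haa hbb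
    apply div_le_div_of_nonneg_left (by norm_num) (by linarith) (by linarith)
  have hμ01 : μ1 ≤ μ0 := hmon _ _ _ _ ha0 hb0 (Real.sqrt_le_sqrt (by linarith))
    (Real.sqrt_le_sqrt (by linarith))
  have hμ12 : μ2 ≤ μ1 := hmon _ _ _ _ ha1 hb1 (Real.sqrt_le_sqrt (by linarith))
    (Real.sqrt_le_sqrt (by linarith))
  have hμ23 : μ3 ≤ μ2 := hmon _ _ _ _ ha2 hb2 (Real.sqrt_le_sqrt (by linarith))
    (Real.sqrt_le_sqrt (by linarith))
  have hμ34 : μ4 ≤ μ3 := hmon _ _ _ _ ha3 hb3 (Real.sqrt_le_sqrt (by linarith))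
    (Real.sqrt_le_sqrt (by linarith))
  have hμ45 : μ5 ≤ μ4 := hmon _ _ _ _ ha4 hb4 (Real.sqrt_le_sqrt (by linarith))
    (Real.sqrt_le_sqrt (by linarith))
  have hμ5pos : 0 < μ5 := by positivity
  have hQ0 : 0 ≤ (g0 - t0) * (μ0 - μ1) := mul_nonneg (by linarith) (by linarith)
  have hQ1 : 0 ≤ (g0 + g1 - t0 - t1) * (μ1 - μ2) := mul_nonneg (by linarith) (by linarith)
  have hQ2 : 0 ≤ (g0 + g1 + g2 - t0 - t1 - t2) * (μ2 - μ3) :=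
    mul_nonneg (by linarith) (by linarith)
  have hQ3 : 0 ≤ (g0 + g1 + g2 + g3 - t0 - t1 - t2 - t3) * (μ3 - μ4) :=
    mul_nonneg (by linarith) (by linarith)
  have hQ4 : 0 ≤ (g0 + g1 + g2 + g3 + g4 - t0 - t1 - t2 - t3 - t4) * (μ4 - μ5) :=
    mul_nonneg (by linarith) (by linarith)
  have hQ5 : 0 ≤ (g0 + g1 + g2 + g3 + g4 + g5 - t0 - t1 - t2 - t3 - t4 - t5) * μ5 :=
    mul_nonneg (by linarith) (by linarith)
  have keyid : (a0 + a1 + a2 + a3 + a4 + a5) - (b0 + b1 + b2 + b3 + b4 + b5) =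
      (g0 - t0) * (μ0 - μ1) + (g0 + g1 - t0 - t1) * (μ1 - μ2) +
      (g0 + g1 + g2 - t0 - t1 - t2) * (μ2 - μ3) +
      (g0 + g1 + g2 + g3 - t0 - t1 - t2 - t3) * (μ3 - μ4) +
      (g0 + g1 + g2 + g3 + g4 - t0 - t1 - t2 - t3 - t4) * (μ4 - μ5) +
      (g0 + g1 + g2 + g3 + g4 + g5 - t0 - t1 - t2 - t3 - t4 - t5) * μ5 := by
    linear_combination hd0 + hd1 + hd2 + hd3 + hd4 + hd5
  linarith [keyid, hQ0, hQ1, hQ2, hQ3, hQ4, hQ5]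

def Tlow (M₁ M₂ M₃ M₄ M₅ M₆ : ℝ) : ℕ → ℝ := fun k =>
  if k = 0 then 0 else if k = 1 then M₁ else if k = 2 then M₁ + M₂
  else if k = 3 then 2*M₁+M₂+M₃ else if k = 4 then 2*M₁+2*M₂+M₃+M₄
  else if k = 5 then 3*M₁+2*M₂+2*M₃+M₄+M₅ else 3*M₁+3*M₂+2*M₃+2*M₄+M₅+M₆

set_option maxHeartbeats 2000000 in
lemma Hs_aux (M₁ M₂ M₃ M₄ M₅ M₆ u v w x y z : ℝ) (s : Fin 6 → ℝ)
    (hs0 : s 0 = u) (hs1 : s 1 = u + v) (hs2 : s 2 = u + v + w)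
    (hs3 : s 3 = x) (hs4 : s 4 = x + y) (hs5 : s 5 = x + y + z)
    (h₁ : 0 < M₁) (h12 : M₁ ≤ M₂) (h23 : M₂ ≤ M₃) (h34 : M₃ ≤ M₄) (h45 : M₄ ≤ M₅)
    (h56 : M₅ ≤ M₆)
    (hu : M₁ ≤ u) (hv : M₁ ≤ v) (hw : M₁ ≤ w) (hx : M₁ ≤ x) (hy : M₁ ≤ y) (hz : M₁ ≤ z)
    (hux : M₁ + M₂ ≤ u + x) (huv : M₁ + M₂ ≤ u + v) (hxy : M₁ + M₂ ≤ x + y)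
    (huvw : M₁ + M₂ + M₃ ≤ u + v + w) (hxyz : M₁ + M₂ + M₃ ≤ x + y + z)
    (huvx : M₁ + M₂ + M₃ ≤ u + v + x) (huxy : M₁ + M₂ + M₃ ≤ u + x + y)
    (huvwx : M₁ + M₂ + M₃ + M₄ ≤ u + v + w + x)
    (huxyz : M₁ + M₂ + M₃ + M₄ ≤ u + x + y + z)
    (huvxy : M₁ + M₂ + M₃ + M₄ ≤ u + v + x + y)
    (huvwxy : M₁ + M₂ + M₃ + M₄ + M₅ ≤ u + v + w + x + y)
    (huvxyz : M₁ + M₂ + M₃ + M₄ + M₅ ≤ u + v + x + y + z)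
    (hall : M₁ + M₂ + M₃ + M₄ + M₅ + M₆ ≤ u + v + w + x + y + z)
    (S : Finset (Fin 6)) :
    Tlow M₁ M₂ M₃ M₄ M₅ M₆ S.card ≤ ∑ i ∈ S, s i := by
  have hrep : S = Finset.univ.filter (· ∈ S) := by simp
  rw [hrep, Finset.sum_filter, Finset.card_filter, Fin.sum_univ_six, Fin.sum_univ_six,
    hs0, hs1, hs2, hs3, hs4, hs5]
  by_cases h0 : (0 : Fin 6) ∈ S <;> by_cases h1 : (1 : Fin 6) ∈ S <;>
    by_cases h2 : (2 : Fin 6) ∈ S <;> by_cases h3 : (3 : Fin 6) ∈ S <;>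
    by_cases h4 : (4 : Fin 6) ∈ S <;> by_cases h5 : (5 : Fin 6) ∈ S <;>
  · simp only [h0, h1, h2, h3, h4, h5, if_true, if_false, ite_true, ite_false,
      eq_self_iff_true, not_true, not_false_iff]
    norm_num [Tlow]
    try linarith

set_option maxHeartbeats 2000000
/-- Alternating 6-interval framework: among configurations of six single-interval
regions with three intervals stacked from the origin on each side (density `|x|`),
the perimeter is minimized by the alternating arrangement `R₅ R₃ R₁ . R₂ R₄ R₆`.
Here `(u, v, w, x, y, z)` is any enumeration of the multiset `{M₁, …, M₆}`, with
masses `u` (inner), `v`, `w` (outer) on one side and `x` (inner), `y`, `z` (outer)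
on the other. -/
theorem alternating_six_interval_framework (M₁ M₂ M₃ M₄ M₅ M₆ : ℝ)
    (h₁ : 0 < M₁) (h12 : M₁ ≤ M₂) (h23 : M₂ ≤ M₃) (h34 : M₃ ≤ M₄) (h45 : M₄ ≤ M₅)
    (h56 : M₅ ≤ M₆)
    (u v w x y z : ℝ)
    (hperm : ∃ σ : Equiv.Perm (Fin 6),
      ![u, v, w, x, y, z] = ![M₁, M₂, M₃, M₄, M₅, M₆] ∘ σ) :
    Real.sqrt (2 * M₂) + Real.sqrt (2 * (M₂ + M₄)) + Real.sqrt (2 * (M₂ + M₄ + M₆)) +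
      Real.sqrt (2 * M₁) + Real.sqrt (2 * (M₁ + M₃)) +
      Real.sqrt (2 * (M₁ + M₃ + M₅)) ≤
    Real.sqrt (2 * u) + Real.sqrt (2 * (u + v)) + Real.sqrt (2 * (u + v + w)) +
      Real.sqrt (2 * x) + Real.sqrt (2 * (x + y)) +
      Real.sqrt (2 * (x + y + z)) := by
  obtain ⟨σ, hperm⟩ := hperm
  set Mv : Fin 6 → ℝ := ![M₁, M₂, M₃, M₄, M₅, M₆] with hMvdef
  have hMv : Monotone Mv := by
    rw [hMvdef, Fin.monotone_iff_le_succ]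
    intro i
    fin_cases i <;> simpa using by assumption
  have hu' : u = Mv (σ 0) := congrFun hperm 0
  have hv' : v = Mv (σ 1) := congrFun hperm 1
  have hw' : w = Mv (σ 2) := congrFun hperm 2
  have hx' : x = Mv (σ 3) := congrFun hperm 3
  have hy' : y = Mv (σ 4) := congrFun hperm 4
  have hz' : z = Mv (σ 5) := congrFun hperm 5
  have hne : ∀ i j : Fin 6, i ≠ j → σ i ≠ σ j := fun i j hij h => hij (σ.injective h)
  -- the pool of rearrangement inequalities
  have hM1 : ∀ i : Fin 6, M₁ ≤ Mv i := fun i => hMv (Fin.zero_le i)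
  have hu : M₁ ≤ u := by rw [hu']; exact hM1 _
  have hv : M₁ ≤ v := by rw [hv']; exact hM1 _
  have hw : M₁ ≤ w := by rw [hw']; exact hM1 _
  have hx : M₁ ≤ x := by rw [hx']; exact hM1 _
  have hy : M₁ ≤ y := by rw [hy']; exact hM1 _
  have hz : M₁ ≤ z := by rw [hz']; exact hM1 _
  have hux : M₁ + M₂ ≤ u + x := by
    have h := L2aux Mv hMv (hne 0 3 (by decide)); rw [← hu', ← hx'] at h; exact h
  have huv : M₁ + M₂ ≤ u + v := by
    have h := L2aux Mv hMv (hne 0 1 (by decide)); rw [← hu', ← hv'] at h; exact h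
  have hxy : M₁ + M₂ ≤ x + y := by
    have h := L2aux Mv hMv (hne 3 4 (by decide)); rw [← hx', ← hy'] at h; exact h
  have huvw : M₁ + M₂ + M₃ ≤ u + v + w := by
    have h := L3aux Mv hMv (hne 0 1 (by decide)) (hne 0 2 (by decide)) (hne 1 2 (by decide))
    rw [← hu', ← hv', ← hw'] at h; exact h
  have hxyz : M₁ + M₂ + M₃ ≤ x + y + z := by
    have h := L3aux Mv hMv (hne 3 4 (by decide)) (hne 3 5 (by decide)) (hne 4 5 (by decide))
    rw [← hx', ← hy', ← hz'] at h; exact h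
  have huvx : M₁ + M₂ + M₃ ≤ u + v + x := by
    have h := L3aux Mv hMv (hne 0 1 (by decide)) (hne 0 3 (by decide)) (hne 1 3 (by decide))
    rw [← hu', ← hv', ← hx'] at h; exact h
  have huxy : M₁ + M₂ + M₃ ≤ u + x + y := by
    have h := L3aux Mv hMv (hne 0 3 (by decide)) (hne 0 4 (by decide)) (hne 3 4 (by decide))
    rw [← hu', ← hx', ← hy'] at h; exact h
  have huvwx : M₁ + M₂ + M₃ + M₄ ≤ u + v + w + x := by
    have h := L4aux Mv hMv (hne 0 1 (by decide)) (hne 0 2 (by decide)) (hne 0 3 (by decide))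
      (hne 1 2 (by decide)) (hne 1 3 (by decide)) (hne 2 3 (by decide))
    rw [← hu', ← hv', ← hw', ← hx'] at h; exact h
  have huxyz : M₁ + M₂ + M₃ + M₄ ≤ u + x + y + z := by
    have h := L4aux Mv hMv (hne 0 3 (by decide)) (hne 0 4 (by decide)) (hne 0 5 (by decide))
      (hne 3 4 (by decide)) (hne 3 5 (by decide)) (hne 4 5 (by decide))
    rw [← hu', ← hx', ← hy', ← hz'] at h; exact h
  have huvxy : M₁ + M₂ + M₃ + M₄ ≤ u + v + x + y := by
    have h := L4aux Mv hMv (hne 0 1 (by decide)) (hne 0 3 (by decide)) (hne 0 4 (by decide))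
      (hne 1 3 (by decide)) (hne 1 4 (by decide)) (hne 3 4 (by decide))
    rw [← hu', ← hv', ← hx', ← hy'] at h; exact h
  have huvwxy : M₁ + M₂ + M₃ + M₄ + M₅ ≤ u + v + w + x + y := by
    have h := L5aux Mv hMv (hne 0 1 (by decide)) (hne 0 2 (by decide)) (hne 0 3 (by decide))
      (hne 0 4 (by decide)) (hne 1 2 (by decide)) (hne 1 3 (by decide)) (hne 1 4 (by decide))
      (hne 2 3 (by decide)) (hne 2 4 (by decide)) (hne 3 4 (by decide))
    rw [← hu', ← hv', ← hw', ← hx', ← hy'] at h; exact h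
  have huvxyz : M₁ + M₂ + M₃ + M₄ + M₅ ≤ u + v + x + y + z := by
    have h := L5aux Mv hMv (hne 0 1 (by decide)) (hne 0 3 (by decide)) (hne 0 4 (by decide))
      (hne 0 5 (by decide)) (hne 1 3 (by decide)) (hne 1 4 (by decide)) (hne 1 5 (by decide))
      (hne 3 4 (by decide)) (hne 3 5 (by decide)) (hne 4 5 (by decide))
    rw [← hu', ← hv', ← hx', ← hy', ← hz'] at h; exact h
  have hall : M₁ + M₂ + M₃ + M₄ + M₅ + M₆ ≤ u + v + w + x + y + z := by
    have h := Equiv.sum_comp σ Mv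
    rw [Fin.sum_univ_six, Fin.sum_univ_six] at h
    rw [← hu', ← hv', ← hw', ← hx', ← hy', ← hz'] at h
    exact le_of_eq h.symm
  -- the six prefix values
  set s : Fin 6 → ℝ := ![u, u + v, u + v + w, x, x + y, x + y + z] with hsdef
  have hs0 : s 0 = u := rfl
  have hs1 : s 1 = u + v := rfl
  have hs2 : s 2 = u + v + w := rfl
  have hs3 : s 3 = x := rfl
  have hs4 : s 4 = x + y := rfl
  have hs5 : s 5 = x + y + z := rfl
  have Hs := Hs_aux M₁ M₂ M₃ M₄ M₅ M₆ u v w x y z s hs0 hs1 hs2 hs3 hs4 hs5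
    h₁ h12 h23 h34 h45 h56 hu hv hw hx hy hz hux huv hxy huvw hxyz huvx huxy
    huvwx huxyz huvxy huvwxy huvxyz hall
  -- sort the prefix values
  set τ : Equiv.Perm (Fin 6) := Tuple.sort s with hτdef
  have hmono : Monotone (s ∘ τ) := Tuple.monotone_sort s
  have hneτ : ∀ i j : Fin 6, i ≠ j → τ i ≠ τ j := fun i j hij h => hij (τ.injective h)
  have hg01 : s (τ 0) ≤ s (τ 1) := hmono (show (0 : Fin 6) ≤ 1 by decide)
  have hg12 : s (τ 1) ≤ s (τ 2) := hmono (show (1 : Fin 6) ≤ 2 by decide)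
  have hg23 : s (τ 2) ≤ s (τ 3) := hmono (show (2 : Fin 6) ≤ 3 by decide)
  have hg34 : s (τ 3) ≤ s (τ 4) := hmono (show (3 : Fin 6) ≤ 4 by decide)
  have hg45 : s (τ 4) ≤ s (τ 5) := hmono (show (4 : Fin 6) ≤ 5 by decide)
  -- partial sums of the sorted values
  have q1 : M₁ ≤ s (τ 0) := by
    have h := Hs {τ 0}
    rw [Finset.card_singleton, Finset.sum_singleton] at h
    norm_num [Tlow] at h; exact h
  have q2 : M₁ + M₂ ≤ s (τ 0) + s (τ 1) := by
    have h := Hs {τ 0, τ 1}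
    rw [Finset.sum_insert (by simp [hneτ 0 1 (by decide)]), Finset.sum_singleton,
      Finset.card_insert_of_notMem (by simp [hneτ 0 1 (by decide)]),
      Finset.card_singleton] at h
    norm_num [Tlow] at h; linarith
  have q3 : 2*M₁ + M₂ + M₃ ≤ s (τ 0) + s (τ 1) + s (τ 2) := by
    have h := Hs {τ 0, τ 1, τ 2}
    rw [Finset.sum_insert (by simp [hneτ 0 1 (by decide), hneτ 0 2 (by decide)]),
      Finset.sum_insert (by simp [hneτ 1 2 (by decide)]), Finset.sum_singleton,
      Finset.card_insert_of_notMem (by simp [hneτ 0 1 (by decide), hneτ 0 2 (by decide)]),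
      Finset.card_insert_of_notMem (by simp [hneτ 1 2 (by decide)]),
      Finset.card_singleton] at h
    norm_num [Tlow] at h; linarith
  have q4 : 2*M₁ + 2*M₂ + M₃ + M₄ ≤ s (τ 0) + s (τ 1) + s (τ 2) + s (τ 3) := by
    have h := Hs {τ 0, τ 1, τ 2, τ 3}
    rw [Finset.sum_insert (by
        simp [hneτ 0 1 (by decide), hneτ 0 2 (by decide), hneτ 0 3 (by decide)]),
      Finset.sum_insert (by simp [hneτ 1 2 (by decide), hneτ 1 3 (by decide)]),
      Finset.sum_insert (by simp [hneτ 2 3 (by decide)]), Finset.sum_singleton,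
      Finset.card_insert_of_notMem (by
        simp [hneτ 0 1 (by decide), hneτ 0 2 (by decide), hneτ 0 3 (by decide)]),
      Finset.card_insert_of_notMem (by simp [hneτ 1 2 (by decide), hneτ 1 3 (by decide)]),
      Finset.card_insert_of_notMem (by simp [hneτ 2 3 (by decide)]),
      Finset.card_singleton] at h
    norm_num [Tlow] at h; linarith
  have q5 : 3*M₁ + 2*M₂ + 2*M₃ + M₄ + M₅ ≤
      s (τ 0) + s (τ 1) + s (τ 2) + s (τ 3) + s (τ 4) := by
    have h := Hs {τ 0, τ 1, τ 2, τ 3, τ 4}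
    rw [Finset.sum_insert (by
        simp [hneτ 0 1 (by decide), hneτ 0 2 (by decide), hneτ 0 3 (by decide),
          hneτ 0 4 (by decide)]),
      Finset.sum_insert (by
        simp [hneτ 1 2 (by decide), hneτ 1 3 (by decide), hneτ 1 4 (by decide)]),
      Finset.sum_insert (by simp [hneτ 2 3 (by decide), hneτ 2 4 (by decide)]),
      Finset.sum_insert (by simp [hneτ 3 4 (by decide)]), Finset.sum_singleton,
      Finset.card_insert_of_notMem (by
        simp [hneτ 0 1 (by decide), hneτ 0 2 (by decide), hneτ 0 3 (by decide),
          hneτ 0 4 (by decide)]),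
      Finset.card_insert_of_notMem (by
        simp [hneτ 1 2 (by decide), hneτ 1 3 (by decide), hneτ 1 4 (by decide)]),
      Finset.card_insert_of_notMem (by simp [hneτ 2 3 (by decide), hneτ 2 4 (by decide)]),
      Finset.card_insert_of_notMem (by simp [hneτ 3 4 (by decide)]),
      Finset.card_singleton] at h
    norm_num [Tlow] at h; linarith
  have q6 : 3*M₁ + 3*M₂ + 2*M₃ + 2*M₄ + M₅ + M₆ ≤
      s (τ 0) + s (τ 1) + s (τ 2) + s (τ 3) + s (τ 4) + s (τ 5) := by
    have h := Hs {τ 0, τ 1, τ 2, τ 3, τ 4, τ 5}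
    rw [Finset.sum_insert (by
        simp [hneτ 0 1 (by decide), hneτ 0 2 (by decide), hneτ 0 3 (by decide),
          hneτ 0 4 (by decide), hneτ 0 5 (by decide)]),
      Finset.sum_insert (by
        simp [hneτ 1 2 (by decide), hneτ 1 3 (by decide), hneτ 1 4 (by decide),
          hneτ 1 5 (by decide)]),
      Finset.sum_insert (by
        simp [hneτ 2 3 (by decide), hneτ 2 4 (by decide), hneτ 2 5 (by decide)]),
      Finset.sum_insert (by simp [hneτ 3 4 (by decide), hneτ 3 5 (by decide)]),
      Finset.sum_insert (by simp [hneτ 4 5 (by decide)]), Finset.sum_singleton,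
      Finset.card_insert_of_notMem (by
        simp [hneτ 0 1 (by decide), hneτ 0 2 (by decide), hneτ 0 3 (by decide),
          hneτ 0 4 (by decide), hneτ 0 5 (by decide)]),
      Finset.card_insert_of_notMem (by
        simp [hneτ 1 2 (by decide), hneτ 1 3 (by decide), hneτ 1 4 (by decide),
          hneτ 1 5 (by decide)]),
      Finset.card_insert_of_notMem (by
        simp [hneτ 2 3 (by decide), hneτ 2 4 (by decide), hneτ 2 5 (by decide)]),
      Finset.card_insert_of_notMem (by simp [hneτ 3 4 (by decide), hneτ 3 5 (by decide)]),
      Finset.card_insert_of_notMem (by simp [hneτ 4 5 (by decide)]),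
      Finset.card_singleton] at h
    norm_num [Tlow] at h; linarith
  -- apply the Abel comparison
  have final := abel6 (s (τ 0)) (s (τ 1)) (s (τ 2)) (s (τ 3)) (s (τ 4)) (s (τ 5))
    M₁ M₂ (M₁ + M₃) (M₂ + M₄) (M₁ + M₃ + M₅) (M₂ + M₄ + M₆)
    h₁ h12 (by linarith) (by linarith) (by linarith) (by linarith)
    hg01 hg12 hg23 hg34 hg45
    q1 (by linarith) (by linarith) (by linarith) (by linarith) (by linarith)
  -- rewrite the sorted sum as the original sum
  have hc : Real.sqrt (2 * s (τ 0)) + Real.sqrt (2 * s (τ 1)) + Real.sqrt (2 * s (τ 2)) +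
      Real.sqrt (2 * s (τ 3)) + Real.sqrt (2 * s (τ 4)) + Real.sqrt (2 * s (τ 5)) =
      Real.sqrt (2 * s 0) + Real.sqrt (2 * s 1) + Real.sqrt (2 * s 2) +
      Real.sqrt (2 * s 3) + Real.sqrt (2 * s 4) + Real.sqrt (2 * s 5) := by
    have h := Equiv.sum_comp τ (fun i => Real.sqrt (2 * s i))
    rw [Fin.sum_univ_six, Fin.sum_univ_six] at h
    exact h
  rw [hs0, hs1, hs2, hs3, hs4, hs5] at hc
  linarith [final, hc]
end
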